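/- arXiv:2302.13703 — 8 statements merged into one kernel-verified Lean document; each statement's English description precedes it below -/
import Mathlib

section
/- If a partition of a finite set Ω invariant under a transitive permutation group G is the orbit partition of some subgroup of G, then it is the orbit partition of a normal subgroup of G. -/
open Equiv

variable {Ω : Type*}

/-- `G` is a transitive permutation group on `Ω`. -/
def IsTransitive (G : Subgroup (Perm Ω)) : Prop :=
  ∀ x y : Ω, ∃ g ∈ G, g x = y

/-- The partition (setoid) `r` of `Ω` is `G`-invariant. -/
def IsInvariantPartition (G : Subgroup (Perm Ω)) (r : Setoid Ω) : Prop :=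
  ∀ g ∈ G, ∀ x y : Ω, r.r x y → r.r (g x) (g y)

/-- The partition `r` of `Ω` is the orbit partition of the permutation group `H`. -/
def IsOrbitPartition (H : Subgroup (Perm Ω)) (r : Setoid Ω) : Prop :=
  ∀ x y : Ω, r.r x y ↔ ∃ h ∈ H, h x = y

/-- `G` is pre-primitive: every `G`-invariant partition is the orbit partition
of a subgroup of `G`. -/
def IsPrePrimitive (G : Subgroup (Perm Ω)) : Prop :=
  ∀ r : Setoid Ω, IsInvariantPartition G r → ∃ H ≤ G, IsOrbitPartition H r

/-- `N` is a normal subgroup of the permutation group `G`. -/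
def IsNormalIn (N G : Subgroup (Perm Ω)) : Prop :=
  N ≤ G ∧ ∀ g ∈ G, ∀ n ∈ N, g * n * g⁻¹ ∈ N


theorem invariant_orbit_partition_of_subgroup_is_orbit_partition_of_normal_subgroup
    {Ω : Type*} [Fintype Ω] (G : Subgroup (Perm Ω)) (hG : IsTransitive G)
    (r : Setoid Ω) (hr : IsInvariantPartition G r)
    (h : ∃ H ≤ G, IsOrbitPartition H r) :
    ∃ N : Subgroup (Perm Ω), IsNormalIn N G ∧ IsOrbitPartition N r := by
  obtain ⟨H, hHG, hH⟩ := h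
  refine ⟨{ carrier := {g | g ∈ G ∧ ∀ x, r.r x (g x)},
            one_mem' := ⟨G.one_mem, fun x => r.refl x⟩,
            mul_mem' := fun {a b} ha hb =>
              ⟨G.mul_mem ha.1 hb.1, fun x => r.trans (hb.2 x) (ha.2 (b x))⟩,
            inv_mem' := fun {a} ha =>
              ⟨G.inv_mem ha.1, fun x => r.symm (by simpa using ha.2 (a⁻¹ x))⟩ },
         ⟨fun g hg => hg.1, ?_⟩, ?_⟩
  · rintro g hg n ⟨hnG, hn⟩
    refine ⟨G.mul_mem (G.mul_mem hg hnG) (G.inv_mem hg), fun x => ?_⟩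
    have := hr g hg _ _ (hn (g⁻¹ x))
    simpa using this
  · intro x y
    constructor
    · intro hxy
      obtain ⟨k, hkH, hkx⟩ := (hH x y).mp hxy
      exact ⟨k, ⟨hHG hkH, fun z => (hH z (k z)).mpr ⟨k, hkH, rfl⟩⟩, hkx⟩
    · rintro ⟨n, ⟨hnG, hn⟩, rfl⟩
      exact hn x
end

section
/- A transitive permutation group G on a finite set Ω is primitive if and only if it is both quasiprimitive and pre-primitive. -/
open Equiv

variable {Ω : Type*}

/-- `G` is primitive: the only `G`-invariant partitions are the trivial ones. -/
def IsPrimitivePerm (G : Subgroup (Perm Ω)) : Prop :=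
  ∀ r : Setoid Ω, IsInvariantPartition G r → r = ⊥ ∨ r = ⊤

/-- `G` is quasiprimitive: every non-trivial normal subgroup is transitive. -/
def IsQuasiprimitive (G : Subgroup (Perm Ω)) : Prop :=
  ∀ N : Subgroup (Perm Ω), IsNormalIn N G → N = ⊥ ∨ IsTransitive N

/-! If `G` is primitive, the orbit partition of a normal subgroup is `G`-invariant, hence trivial,
and the two trivial partitions are the orbit partitions of `1` and of `G`. Conversely, if the
invariant partition `r` is the orbit partition of `H ≤ G`, then `H` lies in the kernel of the
action of `G` on the blocks of `r`; this kernel is normal in `G`, so by quasiprimitivity it is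
trivial (then so is `H`, and `r = ⊥`) or transitive (then `r` has a single block). -/

open MulAction

section

variable {G H N : Subgroup (Perm Ω)} {r : Setoid Ω}

theorem orbitRel_perm_iff {x y : Ω} : (orbitRel H Ω).r x y ↔ ∃ h ∈ H, h x = y := by
  rw [Setoid.comm', orbitRel_apply, mem_orbit_iff]
  exact ⟨fun ⟨⟨h, hh⟩, hxy⟩ => ⟨h, hh, hxy⟩, fun ⟨h, hh, hxy⟩ => ⟨⟨h, hh⟩, hxy⟩⟩

theorem isOrbitPartition_iff : IsOrbitPartition H r ↔ r = orbitRel H Ω := by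
  simp only [IsOrbitPartition, Setoid.ext_iff, orbitRel_perm_iff]

theorem orbitRel_eq_bot_iff : orbitRel H Ω = ⊥ ↔ H = ⊥ := by
  simp only [Setoid.ext_iff, Setoid.bot_def, orbitRel_perm_iff, Subgroup.eq_bot_iff_forall]
  refine ⟨fun h g hg => Perm.ext fun x => ((h x (g x)).1 ⟨g, hg, rfl⟩).symm, fun h x y => ?_⟩
  constructor
  · rintro ⟨g, hg, rfl⟩
    simp [h g hg]
  · rintro rfl
    exact ⟨1, H.one_mem, rfl⟩

theorem orbitRel_eq_top_iff : orbitRel H Ω = ⊤ ↔ IsTransitive H := by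
  simp only [Setoid.eq_top_iff, orbitRel_perm_iff, IsTransitive]

theorem IsNormalIn.isInvariantPartition_orbitRel (hN : IsNormalIn N G) :
    IsInvariantPartition G (orbitRel N Ω) := by
  intro g hg x y hxy
  obtain ⟨n, hn, rfl⟩ := orbitRel_perm_iff.1 hxy
  exact orbitRel_perm_iff.2 ⟨g * n * g⁻¹, hN.2 g hg n hn, by simp⟩

def blockKernel (r : Setoid Ω) : Subgroup (Perm Ω) where
  carrier := {g | ∀ x, r.r (g x) x}
  one_mem' := r.refl
  mul_mem' {a b} ha hb x := r.trans (ha (b x)) (hb x)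
  inv_mem' {a} ha x := by simpa using r.symm (ha (a⁻¹ x))

theorem IsInvariantPartition.isNormalIn_inf_blockKernel (hr : IsInvariantPartition G r) :
    IsNormalIn (G ⊓ blockKernel r) G := by
  refine ⟨inf_le_left, fun g hg n ⟨hnG, hn⟩ => ⟨G.mul_mem (G.mul_mem hg hnG) (G.inv_mem hg), ?_⟩⟩
  intro x
  simpa using hr g hg _ _ (hn (g⁻¹ x))

theorem le_blockKernel_orbitRel : H ≤ blockKernel (orbitRel H Ω) :=
  fun h hh x => orbitRel_perm_iff.2 ⟨h⁻¹, H.inv_mem hh, by simp⟩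

theorem eq_top_of_isTransitive_le_blockKernel (hN : IsTransitive N) (hle : N ≤ blockKernel r) :
    r = ⊤ := by
  refine Setoid.eq_top_iff.2 fun x y => ?_
  obtain ⟨n, hn, rfl⟩ := hN x y
  exact r.symm (hle hn x)

end

theorem primitive_iff_quasiprimitive_and_preprimitive_general
    {Ω : Type*} (G : Subgroup (Perm Ω)) (hG : IsTransitive G) :
    IsPrimitivePerm G ↔ IsQuasiprimitive G ∧ IsPrePrimitive G := by
  simp only [IsPrePrimitive, isOrbitPartition_iff]
  refine ⟨fun hprim => ⟨fun N hN => ?_, fun r hr => ?_⟩, fun ⟨hquasi, hpre⟩ r hr => ?_⟩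
  · rw [← orbitRel_eq_bot_iff, ← orbitRel_eq_top_iff]
    exact hprim _ hN.isInvariantPartition_orbitRel
  · rcases hprim r hr with rfl | rfl
    · exact ⟨⊥, bot_le, (orbitRel_eq_bot_iff.2 rfl).symm⟩
    · exact ⟨G, le_rfl, (orbitRel_eq_top_iff.2 hG).symm⟩
  · obtain ⟨H, hHG, rfl⟩ := hpre r hr
    rcases hquasi _ hr.isNormalIn_inf_blockKernel with hbot | htrans
    · left
      rw [orbitRel_eq_bot_iff, ← le_bot_iff, ← hbot]
      exact le_inf hHG le_blockKernel_orbitRel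
    · exact Or.inr (eq_top_of_isTransitive_le_blockKernel htrans inf_le_right)

theorem primitive_iff_quasiprimitive_and_preprimitive
    {Ω : Type*} [Fintype Ω] (G : Subgroup (Perm Ω)) (hG : IsTransitive G) :
    IsPrimitivePerm G ↔ IsQuasiprimitive G ∧ IsPrePrimitive G :=
  primitive_iff_quasiprimitive_and_preprimitive_general G hG
end

section
/- Let G be a transitive permutation group on a finite set Ω and α ∈ Ω. Then G is pre-primitive if and only if every subgroup H of G containing the point stabiliser G_α has the form H = N·G_α for some normal subgroup N of G. -/
open Equiv Pointwise

variable {Ω : Type*}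

/-!
Overgroups `H` of `G_α` correspond to `G`-invariant partitions: `H` gives the partition into the
translates of the block `Hα`, and a partition gives the setwise stabiliser of the class of `α`.
Pre-primitivity may always be witnessed by a normal subgroup, namely the kernel of the action of `G`
on the classes; and for `N` normal in `G`, the orbit partition of `N` corresponds to `N·G_α`.
-/

section

variable {G H N : Subgroup (Perm Ω)} {α : Ω}

lemma mem_mul_stabilizer_iff (hNG : N ≤ G) {g : Perm Ω} :
    g ∈ (N : Set (Perm Ω)) * ((G ⊓ MulAction.stabilizer (Perm Ω) α) : Set (Perm Ω)) ↔
      g ∈ G ∧ ∃ n ∈ N, n α = g α := by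
  constructor
  · rintro ⟨n, hn, s, ⟨hsG, hsα : s α = α⟩, rfl⟩
    exact ⟨G.mul_mem (hNG hn) hsG, n, hn, by rw [Perm.mul_apply, hsα]⟩
  · rintro ⟨hg, n, hn, hnα⟩
    refine ⟨n, hn, n⁻¹ * g, ⟨G.mul_mem (G.inv_mem (hNG hn)) hg, ?_⟩, mul_inv_cancel_left n g⟩
    simp [MulAction.mem_stabilizer_iff, Perm.smul_def, ← hnα]

lemma mem_iff_exists_apply_eq (hαH : G ⊓ MulAction.stabilizer (Perm Ω) α ≤ H) (hHG : H ≤ G)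
    {g : Perm Ω} (hg : g ∈ G) : (∃ h ∈ H, h α = g α) ↔ g ∈ H := by
  refine ⟨fun ⟨h, hh, hgh⟩ => ?_, fun hgH => ⟨g, hgH, rfl⟩⟩
  have hs : h⁻¹ * g ∈ G ⊓ MulAction.stabilizer (Perm Ω) α := ⟨G.mul_mem (G.inv_mem (hHG hh)) hg,
    by simp [MulAction.mem_stabilizer_iff, Perm.smul_def, ← hgh]⟩
  simpa using H.mul_mem hh (hαH hs)

variable (G) in
def sameTranslatesSetoid (B : Set Ω) : Setoid Ω where
  r x y := ∀ g ∈ G, g x ∈ B ↔ g y ∈ B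
  iseqv :=
    ⟨fun _ _ _ => Iff.rfl, fun h g hg => (h g hg).symm,
      fun h₁ h₂ g hg => (h₁ g hg).trans (h₂ g hg)⟩

lemma isInvariantPartition_sameTranslatesSetoid (B : Set Ω) :
    IsInvariantPartition G (sameTranslatesSetoid G B) :=
  fun g hg _ _ hxy g' hg' => hxy (g' * g) (G.mul_mem hg' hg)

lemma sameTranslatesSetoid_orbit_rel_iff (hαH : G ⊓ MulAction.stabilizer (Perm Ω) α ≤ H)
    (hHG : H ≤ G) {g : Perm Ω} (hg : g ∈ G) :
    (sameTranslatesSetoid G {y | ∃ h ∈ H, h α = y}).r α (g α) ↔ g ∈ H := by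
  have hmem : ∀ g' ∈ G, g' α ∈ {y | ∃ h ∈ H, h α = y} ↔ g' ∈ H :=
    fun g' hg' => mem_iff_exists_apply_eq hαH hHG hg'
  constructor
  · intro hrel
    simpa using (hmem g hg).1 ((hrel 1 G.one_mem).1 ((hmem 1 G.one_mem).2 H.one_mem))
  · intro hgH g' hg'
    rw [← Perm.mul_apply, hmem g' hg', hmem _ (G.mul_mem hg' hg), H.mul_mem_cancel_right hgH]

variable (G) in
def partitionKernel (r : Setoid Ω) : Subgroup (Perm Ω) where
  carrier := {g | g ∈ G ∧ ∀ x, r x (g x)}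
  one_mem' := ⟨G.one_mem, fun x => r.refl x⟩
  mul_mem' := fun ⟨ha, ha'⟩ ⟨hb, hb'⟩ => ⟨G.mul_mem ha hb, fun x => r.trans (hb' x) (ha' _)⟩
  inv_mem' := fun {a} ⟨ha, ha'⟩ =>
    ⟨G.inv_mem ha, fun x => r.symm (by simpa using ha' (a⁻¹ x))⟩

lemma isNormalIn_partitionKernel {r : Setoid Ω} (hr : IsInvariantPartition G r) :
    IsNormalIn (partitionKernel G r) G := by
  refine ⟨fun _ hn => hn.1, fun g hg n ⟨hnG, hn⟩ => ⟨G.mul_mem (G.mul_mem hg hnG) (G.inv_mem hg),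
    fun x => ?_⟩⟩
  simpa using hr g hg _ _ (hn (g⁻¹ x))

lemma isOrbitPartition_partitionKernel {r : Setoid Ω} {K : Subgroup (Perm Ω)} (hKG : K ≤ G)
    (hK : IsOrbitPartition K r) : IsOrbitPartition (partitionKernel G r) r := by
  refine fun x y => ⟨fun hxy => ?_, fun ⟨n, hn, hnx⟩ => hnx ▸ hn.2 x⟩
  obtain ⟨k, hk, rfl⟩ := (hK x y).1 hxy
  exact ⟨k, ⟨hKG hk, fun z => (hK z (k z)).2 ⟨k, hk, rfl⟩⟩, rfl⟩

lemma IsPrePrimitive.exists_isNormalIn (hpp : IsPrePrimitive G) {r : Setoid Ω}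
    (hr : IsInvariantPartition G r) : ∃ N, IsNormalIn N G ∧ IsOrbitPartition N r := by
  obtain ⟨K, hKG, hK⟩ := hpp r hr
  exact ⟨_, isNormalIn_partitionKernel hr, isOrbitPartition_partitionKernel hKG hK⟩

variable (G α) in
def classStabilizer {r : Setoid Ω} (hr : IsInvariantPartition G r) : Subgroup (Perm Ω) where
  carrier := {g | g ∈ G ∧ r (g α) α}
  one_mem' := ⟨G.one_mem, r.refl α⟩
  mul_mem' := fun {a _} ⟨ha, ha'⟩ ⟨hb, hb'⟩ => ⟨G.mul_mem ha hb, r.trans (hr a ha _ _ hb') ha'⟩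
  inv_mem' := fun {a} ⟨ha, ha'⟩ =>
    ⟨G.inv_mem ha, r.symm (by simpa using hr a⁻¹ (G.inv_mem ha) _ _ ha')⟩

lemma stabilizer_le_classStabilizer {r : Setoid Ω} (hr : IsInvariantPartition G r) :
    G ⊓ MulAction.stabilizer (Perm Ω) α ≤ classStabilizer G α hr :=
  fun g ⟨hg, hgα⟩ => ⟨hg, by rw [show g α = α from hgα]⟩

lemma mem_classStabilizer_iff {r : Setoid Ω} (hr : IsInvariantPartition G r) {g : Perm Ω}
    (hg : g ∈ G) : g ∈ classStabilizer G α hr ↔ r α (g α) :=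
  ⟨fun h => r.symm h.2, fun h => ⟨hg, r.symm h⟩⟩

lemma IsNormalIn.exists_apply_apply_eq (hN : IsNormalIn N G) {g : Perm Ω} (hg : g ∈ G) {x y : Ω}
    (hxy : ∃ n ∈ N, n x = y) : ∃ n ∈ N, n (g x) = g y := by
  obtain ⟨n, hn, rfl⟩ := hxy
  exact ⟨g * n * g⁻¹, hN.2 g hg n hn, by simp⟩

lemma IsTransitive.rel_of_rel_basepoint (hG : IsTransitive G) {R S : Ω → Ω → Prop}
    (hR : ∀ g ∈ G, ∀ x y, R x y → R (g x) (g y)) (hS : ∀ g ∈ G, ∀ x y, S x y → S (g x) (g y))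
    (hα : ∀ y, R α y → S α y) {x y : Ω} (hxy : R x y) : S x y := by
  obtain ⟨g, hg, rfl⟩ := hG α x
  have hR' : R α (g⁻¹ y) := by simpa using hR g⁻¹ (G.inv_mem hg) _ _ hxy
  simpa using hS g hg _ _ (hα _ hR')

lemma isOrbitPartition_of_isNormalIn (hG : IsTransitive G) {r : Setoid Ω}
    (hr : IsInvariantPartition G r) (hN : IsNormalIn N G) (hα : ∀ y, r α y ↔ ∃ n ∈ N, n α = y) :
    IsOrbitPartition N r := by
  have hS : ∀ g ∈ G, ∀ x y : Ω, (∃ n ∈ N, n x = y) → ∃ n ∈ N, n (g x) = g y :=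
    fun _ hg _ _ => hN.exists_apply_apply_eq hg
  exact fun x y => ⟨hG.rel_of_rel_basepoint hr hS fun y => (hα y).1,
    hG.rel_of_rel_basepoint hS hr fun y => (hα y).2⟩

end

theorem preprimitive_iff_overgroups_of_stabilizer_general
    {Ω : Type*} (G : Subgroup (Perm Ω)) (hG : IsTransitive G) (α : Ω) :
    IsPrePrimitive G ↔
      ∀ H : Subgroup (Perm Ω),
        G ⊓ MulAction.stabilizer (Perm Ω) α ≤ H → H ≤ G →
        ∃ N : Subgroup (Perm Ω), IsNormalIn N G ∧
          (H : Set (Perm Ω)) =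
            (N : Set (Perm Ω)) * ((G ⊓ MulAction.stabilizer (Perm Ω) α) : Set (Perm Ω)) := by
  constructor
  · intro hpp H hαH hHG
    obtain ⟨N, hN, hNr⟩ :=
      hpp.exists_isNormalIn (isInvariantPartition_sameTranslatesSetoid {y | ∃ h ∈ H, h α = y})
    refine ⟨N, hN, Set.ext fun g => ?_⟩
    rw [mem_mul_stabilizer_iff hN.1, SetLike.mem_coe]
    refine ⟨fun hg => ⟨hHG hg, ?_⟩, fun ⟨hg, hn⟩ => ?_⟩
    · exact (hNr _ _).1 ((sameTranslatesSetoid_orbit_rel_iff hαH hHG (hHG hg)).2 hg)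
    · exact (sameTranslatesSetoid_orbit_rel_iff hαH hHG hg).1 ((hNr _ _).2 hn)
  · intro hoverg r hr
    obtain ⟨N, hN, hH⟩ :=
      hoverg (classStabilizer G α hr) (stabilizer_le_classStabilizer hr) fun _ hg => hg.1
    refine ⟨N, hN.1, isOrbitPartition_of_isNormalIn (α := α) hG hr hN fun y => ?_⟩
    obtain ⟨g, hg, rfl⟩ := hG α y
    rw [← mem_classStabilizer_iff hr hg, ← SetLike.mem_coe, hH, mem_mul_stabilizer_iff hN.1,
      and_iff_right hg]

theorem preprimitive_iff_overgroups_of_stabilizer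
    {Ω : Type*} [Fintype Ω] (G : Subgroup (Perm Ω)) (hG : IsTransitive G) (α : Ω) :
    IsPrePrimitive G ↔
      ∀ H : Subgroup (Perm Ω),
        G ⊓ MulAction.stabilizer (Perm Ω) α ≤ H → H ≤ G →
        ∃ N : Subgroup (Perm Ω), IsNormalIn N G ∧
          (H : Set (Perm Ω)) =
            (N : Set (Perm Ω)) * ((G ⊓ MulAction.stabilizer (Perm Ω) α) : Set (Perm Ω)) :=
  preprimitive_iff_overgroups_of_stabilizer_general G hG α
end

section
/- The regular action of a finite group G on itself (by right multiplication) is pre-primitive if and only if every subgroup of G is normal (i.e., G is a Dedekind group). -/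
open Equiv

variable {Ω : Type*}

/-!
A partition of `G` invariant under right multiplication is the partition into right cosets `Hx`,
where `H` is the class of `1`; the orbit partition of a subgroup `K` acting by right
multiplication is the partition into left cosets `xK`. So the regular action is pre-primitive
exactly when every right-coset partition is a left-coset partition, i.e. `Hx = xH` for every
subgroup `H`.
-/

open QuotientGroup

namespace Subgroup

variable {G : Type*} [Group G]

theorem leftRel_iff_exists_mul_eq (H : Subgroup G) (x y : G) :
    leftRel H x y ↔ ∃ h ∈ H, x * h = y :=
  leftRel_apply.trans ⟨fun h => ⟨_, h, mul_inv_cancel_left x y⟩, by rintro ⟨h, hh, rfl⟩; simpa⟩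

theorem rightRel_mul_right (H : Subgroup G) (g x y : G) :
    rightRel H x y → rightRel H (x * g) (y * g) := by
  simp only [rightRel_apply, mul_inv_rev, mul_assoc, mul_inv_cancel_left, imp_self]

theorem rightRel_eq_leftRel_of_normal (H : Subgroup G) [H.Normal] : rightRel H = leftRel H :=
  Setoid.ext fun _ _ => by rw [rightRel_apply, leftRel_apply, Normal.mem_comm_iff inferInstance]

/-- Both partitions have `H = K` as the class of `1`. -/
theorem normal_of_rightRel_eq_leftRel {H K : Subgroup G} (h : rightRel H = leftRel K) :
    H.Normal := by
  have hHK : H = K := by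
    ext s
    simpa [rightRel_apply, leftRel_apply] using Setoid.ext_iff.mp h 1 s
  refine ⟨fun n hn g => ?_⟩
  have hconj : leftRel K g⁻¹ (n * g⁻¹) := h ▸ rightRel_apply.mpr (by simpa using hn)
  simpa [hHK, leftRel_apply, mul_assoc] using hconj

end Subgroup

namespace Setoid

variable {G : Type*} [Group G]

def classOfOneSubgroup (r : Setoid G) (hr : ∀ g x y : G, r x y → r (x * g) (y * g)) :
    Subgroup G where
  carrier := {s | r 1 s}
  one_mem' := r.refl 1
  mul_mem' {a b} ha hb := r.trans hb (by simpa using hr b 1 a ha)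
  inv_mem' {a} ha := r.symm (by simpa using hr a⁻¹ 1 a ha)

@[simp]
theorem mem_classOfOneSubgroup {r : Setoid G} {hr : ∀ g x y : G, r x y → r (x * g) (y * g)}
    {s : G} : s ∈ classOfOneSubgroup r hr ↔ r 1 s :=
  Iff.rfl

theorem eq_rightRel_classOfOneSubgroup (r : Setoid G)
    (hr : ∀ g x y : G, r x y → r (x * g) (y * g)) :
    r = rightRel (classOfOneSubgroup r hr) := by
  refine Setoid.ext fun x y => ?_
  rw [rightRel_apply, mem_classOfOneSubgroup]
  exact ⟨fun h => by simpa using hr x⁻¹ x y h, fun h => by simpa using hr x 1 (y * x⁻¹) h⟩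

end Setoid

theorem regular_action_preprimitive_iff_dedekind_general
    {G : Type*} [Group G] :
    (∀ r : Setoid G, (∀ g x y : G, r.r x y → r.r (x * g) (y * g)) →
        ∃ H : Subgroup G, ∀ x y : G, r.r x y ↔ ∃ h ∈ H, x * h = y) ↔
      ∀ H : Subgroup G, H.Normal := by
  simp_rw [← Subgroup.leftRel_iff_exists_mul_eq]
  constructor
  · intro hpp H
    obtain ⟨K, hK⟩ := hpp (rightRel H) H.rightRel_mul_right
    exact Subgroup.normal_of_rightRel_eq_leftRel (Setoid.ext hK)
  · intro hdedekind r hr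
    set K := r.classOfOneSubgroup hr
    have : K.Normal := hdedekind K
    refine ⟨K, fun x y => ?_⟩
    rw [← K.rightRel_eq_leftRel_of_normal]
    exact Setoid.ext_iff.mp (r.eq_rightRel_classOfOneSubgroup hr) x y

theorem regular_action_preprimitive_iff_dedekind
    {G : Type*} [Group G] [Fintype G] :
    (∀ r : Setoid G, (∀ g x y : G, r.r x y → r.r (x * g) (y * g)) →
        ∃ H : Subgroup G, ∀ x y : G, r.r x y ↔ ∃ h ∈ H, x * h = y) ↔
      ∀ H : Subgroup G, H.Normal :=
  regular_action_preprimitive_iff_dedekind_general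
end

section
/- For any finite group G, the holomorph of G (the semidirect product G ⋊ Aut(G) acting naturally on G, with G acting by right multiplication and Aut(G) acting naturally) is pre-primitive. -/
open Equiv

variable {Ω : Type*}

/-- The holomorph of `G`: the subgroup of `Perm G` generated by right translations
and automorphisms of `G`; its elements are exactly the maps `x ↦ φ x * g`. -/
def holomorph (G : Type*) [Group G] : Subgroup (Perm G) where
  carrier := {σ | ∃ (φ : G ≃* G) (g : G), ∀ x, σ x = φ x * g}
  one_mem' := ⟨MulEquiv.refl G, 1, fun x => by simp⟩
  mul_mem' := by
    rintro σ τ ⟨φ, g, hσ⟩ ⟨ψ, k, hτ⟩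
    refine ⟨ψ.trans φ, φ k * g, fun x => ?_⟩
    simp [Perm.mul_apply, hτ, hσ, mul_assoc]
  inv_mem' := by
    rintro σ ⟨φ, g, hσ⟩
    refine ⟨φ.symm, (φ.symm g)⁻¹, fun x => ?_⟩
    have h1 : σ (φ.symm x * (φ.symm g)⁻¹) = x := by rw [hσ]; simp
    calc σ⁻¹ x = σ⁻¹ (σ (φ.symm x * (φ.symm g)⁻¹)) := by rw [h1]
    _ = _ := by simp

theorem holomorph_preprimitive (G : Type*) [Group G] [Fintype G] :
    IsPrePrimitive (holomorph G) := by
  intro r hr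
  have key : ∀ c x y : G, r.r x y → r.r (x * c) (y * c) := fun c x y h =>
    hr (Equiv.mulRight c) ⟨MulEquiv.refl G, c, fun x => rfl⟩ x y h
  have keyA : ∀ (φ : G ≃* G) (x y : G), r.r x y → r.r (φ x) (φ y) := fun φ x y h =>
    hr φ.toEquiv ⟨φ, 1, fun x => (mul_one _).symm⟩ x y h
  have hBmul : ∀ a b : G, r.r a 1 → r.r b 1 → r.r (a * b) 1 := by
    intro a b ha hb
    have h1 := key b a 1 ha
    rw [one_mul] at h1
    exact r.trans h1 hb
  have hBinv : ∀ a : G, r.r a 1 → r.r a⁻¹ 1 := by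
    intro a ha
    have h1 := key a⁻¹ a 1 ha
    rw [mul_inv_cancel, one_mul] at h1
    exact r.symm h1
  have hBnorm : ∀ (y b : G), r.r b 1 → r.r (y * b * y⁻¹) 1 := by
    intro y b hb
    have h := keyA (MulAut.conj y) b 1 hb
    simpa using h
  refine ⟨{ carrier := {σ | ∃ b : G, r.r b 1 ∧ ∀ x, σ x = x * b}
            one_mem' := ⟨1, r.refl 1, fun x => (mul_one x).symm⟩
            mul_mem' := ?_
            inv_mem' := ?_ }, ?_, ?_⟩
  · rintro σ τ ⟨b, hb, hσ⟩ ⟨c, hc, hτ⟩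
    exact ⟨c * b, hBmul c b hc hb, fun x => by
      simp [Perm.mul_apply, hτ, hσ, mul_assoc]⟩
  · rintro σ ⟨b, hb, hσ⟩
    refine ⟨b⁻¹, hBinv b hb, fun x => ?_⟩
    have h1 : σ (x * b⁻¹) = x := by rw [hσ]; simp
    calc σ⁻¹ x = σ⁻¹ (σ (x * b⁻¹)) := by rw [h1]
    _ = x * b⁻¹ := by simp
  · rintro σ ⟨b, hb, hσ⟩
    exact ⟨MulEquiv.refl G, b, hσ⟩
  · intro x y
    constructor
    · intro hxy
      have h1 := key y⁻¹ x y hxy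
      rw [mul_inv_cancel] at h1
      have h2 := hBnorm y⁻¹ (x * y⁻¹) h1
      have h3 := hBinv _ h2
      have h4 : (y⁻¹ * (x * y⁻¹) * y⁻¹⁻¹)⁻¹ = x⁻¹ * y := by group
      rw [h4] at h3
      exact ⟨Equiv.mulRight (x⁻¹ * y), ⟨x⁻¹ * y, h3, fun z => rfl⟩, by simp⟩
    · rintro ⟨σ, ⟨b, hb, hσ⟩, hσx⟩
      have h1 := hBnorm x b hb
      have h2 := key x _ 1 h1
      rw [one_mul, inv_mul_cancel_right] at h2
      have h3 : y = x * b := by rw [← hσx, hσ]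
      rw [h3]
      exact r.symm h2
end

section
/- Let G and H be transitive permutation groups on finite sets Γ and Δ with a (G×H)-invariant partition Π of Γ×Δ. Then the G-fibre partition refines the part of Π in the sense F_G × F_H ⪯ Π ⪯ P_G × P_H, where F_G, F_H are the fibre partitions and P_G, P_H the projection partitions. -/
open Equiv

variable {Ω : Type*}

/-- The coordinatewise (product) action homomorphism. -/
def prodPermHom (Γ Δ : Type*) : Perm Γ × Perm Δ →* Perm (Γ × Δ) where
  toFun p := Equiv.prodCongr p.1 p.2
  map_one' := by ext ⟨a, b⟩ <;> rfl
  map_mul' p q := by ext ⟨a, b⟩ <;> rfl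

/-- The direct product `G × H` in its coordinatewise product action on `Γ × Δ`,
as a subgroup of `Perm (Γ × Δ)`. -/
def productAction {Γ Δ : Type*} (G : Subgroup (Perm Γ)) (H : Subgroup (Perm Δ)) :
    Subgroup (Perm (Γ × Δ)) :=
  (G.prod H).map (prodPermHom Γ Δ)


section

variable {Γ Δ : Type*} {G : Subgroup (Perm Γ)} {H : Subgroup (Perm Δ)} {rP : Setoid (Γ × Δ)}

theorem prodPermHom_mem_productAction {g : Perm Γ} {h : Perm Δ} (hg : g ∈ G) (hh : h ∈ H) :
    prodPermHom Γ Δ (g, h) ∈ productAction G H :=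
  ⟨(g, h), ⟨hg, hh⟩, rfl⟩

namespace IsInvariantPartition

theorem rel_prodCongr (hrP : IsInvariantPartition (productAction G H) rP)
    {g : Perm Γ} {h : Perm Δ} (hg : g ∈ G) (hh : h ∈ H) {x y : Γ × Δ} (hxy : rP.r x y) :
    rP.r (g x.1, h x.2) (g y.1, h y.2) :=
  hrP _ (prodPermHom_mem_productAction hg hh) x y hxy

theorem rel_left_fibre (hH : IsTransitive H) (hrP : IsInvariantPartition (productAction G H) rP)
    {γ γ' : Γ} {δ : Δ} (h : rP.r (γ, δ) (γ', δ)) (δ' : Δ) : rP.r (γ, δ') (γ', δ') := by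
  obtain ⟨k, hk, rfl⟩ := hH δ δ'
  exact hrP.rel_prodCongr G.one_mem hk h

theorem rel_right_fibre (hG : IsTransitive G) (hrP : IsInvariantPartition (productAction G H) rP)
    {γ : Γ} {δ δ' : Δ} (h : rP.r (γ, δ) (γ, δ')) (γ' : Γ) : rP.r (γ', δ) (γ', δ') := by
  obtain ⟨k, hk, rfl⟩ := hG γ γ'
  exact hrP.rel_prodCongr hk H.one_mem h

end IsInvariantPartition

end

theorem fibre_refines_invariant_refines_projection_general
    {Γ Δ : Type*}
    (G : Subgroup (Perm Γ)) (H : Subgroup (Perm Δ))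
    (hG : IsTransitive G) (hH : IsTransitive H)
    (rP : Setoid (Γ × Δ)) (hrP : IsInvariantPartition (productAction G H) rP) :
    ∀ p q : Γ × Δ,
      ((∃ δ : Δ, rP.r (p.1, δ) (q.1, δ)) ∧ (∃ γ : Γ, rP.r (γ, p.2) (γ, q.2)) →
        rP.r p q) ∧
      (rP.r p q →
        (∃ δ δ' : Δ, rP.r (p.1, δ) (q.1, δ')) ∧ (∃ γ γ' : Γ, rP.r (γ, p.2) (γ', q.2))) := by
  rintro ⟨γ, δ⟩ ⟨γ', δ'⟩
  refine ⟨fun ⟨⟨_, hleft⟩, ⟨_, hright⟩⟩ => ?_, fun hpq => ⟨⟨δ, δ', hpq⟩, ⟨γ, γ', hpq⟩⟩⟩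
  exact rP.trans (hrP.rel_left_fibre hH hleft δ) (hrP.rel_right_fibre hG hright γ')

/-- The sandwich `F_G × F_H ⪯ Π ⪯ P_G × P_H`: any pair related in both fibre
partitions is related in `Π`, and any pair related in `Π` is related in both
projection partitions. -/
theorem fibre_refines_invariant_refines_projection
    {Γ Δ : Type*} [Fintype Γ] [Fintype Δ]
    (G : Subgroup (Perm Γ)) (H : Subgroup (Perm Δ))
    (hG : IsTransitive G) (hH : IsTransitive H)
    (rP : Setoid (Γ × Δ)) (hrP : IsInvariantPartition (productAction G H) rP) :
    ∀ p q : Γ × Δ,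
      ((∃ δ : Δ, rP.r (p.1, δ) (q.1, δ)) ∧ (∃ γ : Γ, rP.r (γ, p.2) (γ, q.2)) →
        rP.r p q) ∧
      (rP.r p q →
        (∃ δ δ' : Δ, rP.r (p.1, δ) (q.1, δ')) ∧ (∃ γ γ' : Γ, rP.r (γ, p.2) (γ', q.2))) :=
  fibre_refines_invariant_refines_projection_general G H hG hH rP hrP
end

section
/- Let G and H be transitive permutation groups on finite sets Γ and Δ, and let G ≀ H act imprimitively on Γ × Δ with canonical partition Π into the fibres Γ × {δ}. Then every (G ≀ H)-invariant partition Σ of Γ × Δ satisfies Σ ⪯ Π or Π ⪯ Σ. -/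
open Equiv

variable {Ω : Type*}

/-- The wreath product `G ≀ H` in its imprimitive action on `Γ × Δ`, as a subgroup
of `Perm (Γ × Δ)`: the base group `G^Δ` acts fibrewise on first coordinates and the
top group `H` acts on second coordinates. -/
def wreathImprimitive {Γ Δ : Type*} (G : Subgroup (Perm Γ)) (H : Subgroup (Perm Δ)) :
    Subgroup (Perm (Γ × Δ)) where
  carrier := {σ | ∃ (f : Δ → Perm Γ) (h : Perm Δ), (∀ δ, f δ ∈ G) ∧ h ∈ H ∧
    ∀ p : Γ × Δ, σ p = (f p.2 p.1, h p.2)}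
  one_mem' := ⟨fun _ => 1, 1, fun _ => G.one_mem, H.one_mem, fun p => rfl⟩
  mul_mem' := by
    rintro σ τ ⟨f, h, hf, hh, hστ⟩ ⟨f', h', hf', hh', hτ⟩
    refine ⟨fun δ => f (h' δ) * f' δ, h * h',
      fun δ => G.mul_mem (hf _) (hf' _), H.mul_mem hh hh', fun p => ?_⟩
    simp only [Perm.mul_apply, hτ p, hστ]
  inv_mem' := by
    rintro σ ⟨f, h, hf, hh, hσ⟩
    refine ⟨fun δ => (f (h⁻¹ δ))⁻¹, h⁻¹, fun δ => G.inv_mem (hf _), H.inv_mem hh, fun p => ?_⟩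
    have h1 : σ ((f (h⁻¹ p.2))⁻¹ p.1, h⁻¹ p.2) = p := by rw [hσ]; simp
    calc σ⁻¹ p = σ⁻¹ (σ ((f (h⁻¹ p.2))⁻¹ p.1, h⁻¹ p.2)) := by rw [h1]
    _ = _ := by simp


/-- An explicit element of the wreath product as a permutation of `Γ × Δ`. -/
def wreathElt {Γ Δ : Type*} (f : Δ → Perm Γ) (h : Perm Δ) : Perm (Γ × Δ) where
  toFun x := (f x.2 x.1, h x.2)
  invFun x := ((f (h⁻¹ x.2))⁻¹ x.1, h⁻¹ x.2)
  left_inv x := by simp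
  right_inv x := by simp

theorem wreathElt_mem {Γ Δ : Type*} (G : Subgroup (Perm Γ)) (H : Subgroup (Perm Δ))
    (f : Δ → Perm Γ) (h : Perm Δ) (hf : ∀ δ, f δ ∈ G) (hh : h ∈ H) :
    wreathElt f h ∈ wreathImprimitive G H :=
  ⟨f, h, hf, hh, fun _ => rfl⟩

/-- Every invariant partition of the imprimitive wreath product refines, or is
refined by, the canonical partition into fibres `Γ × {δ}`. -/
theorem wreath_invariant_partition_comparable_with_canonical
    {Γ Δ : Type*} [Fintype Γ] [Fintype Δ]
    (G : Subgroup (Perm Γ)) (H : Subgroup (Perm Δ))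
    (hG : IsTransitive G) (hH : IsTransitive H)
    (s : Setoid (Γ × Δ)) (hs : IsInvariantPartition (wreathImprimitive G H) s) :
    (∀ p q : Γ × Δ, s.r p q → p.2 = q.2) ∨ (∀ p q : Γ × Δ, p.2 = q.2 → s.r p q) := by
  classical
  by_cases h1 : ∀ p q : Γ × Δ, s.r p q → p.2 = q.2
  · exact Or.inl h1
  right
  push_neg at h1
  obtain ⟨p, q, hpq, hne⟩ := h1
  -- Step 1: every point of the fibre `Γ × {p.2}` is `s`-related to `p`.
  have key : ∀ a : Γ, s.r (a, p.2) p := by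
    intro a
    obtain ⟨g, hg, hga⟩ := hG p.1 a
    set f : Δ → Perm Γ := fun ε => if ε = p.2 then g else 1 with hfdef
    have hmem := wreathElt_mem G H f 1 (fun δ => by
      by_cases hδ : δ = p.2 <;> simp [hfdef, hδ, hg, G.one_mem]) H.one_mem
    have h2 := hs _ hmem p q hpq
    have hσp : wreathElt f 1 p = (a, p.2) := by
      simp [wreathElt, hfdef, hga]
    have hσq : wreathElt f 1 q = q := by
      have hne' : q.2 ≠ p.2 := fun h => hne h.symm
      simp [wreathElt, hfdef, hne']
    rw [hσp, hσq] at h2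
    exact s.trans h2 (s.symm hpq)
  -- Step 2: transport to every fibre using the top group.
  intro x y hxy
  obtain ⟨h, hh, hhp⟩ := hH p.2 x.2
  have hmem := wreathElt_mem G H (fun _ => 1) h (fun _ => G.one_mem) hh
  have hrel : s.r (x.1, p.2) (y.1, p.2) := s.trans (key x.1) (s.symm (key y.1))
  have h2 := hs _ hmem _ _ hrel
  have hx : wreathElt (fun _ => (1 : Perm Γ)) h (x.1, p.2) = x := by
    simp [wreathElt, hhp]
  have hy : wreathElt (fun _ => (1 : Perm Γ)) h (y.1, p.2) = y := by
    simp [wreathElt, hhp, hxy]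
  rwa [hx, hy] at h2
end

section
/- Let G be a transitive imprimitive permutation group on a finite set Ω which is pre-synchronizing. Then |Ω| = 4 and G is the Klein four-group acting regularly. -/
open Equiv

variable {Ω : Type*}

/-- `r` is section-regular for `G`: there is a set `A` all of whose `G`-images are
transversals of `r`. -/
def IsSectionRegular (G : Subgroup (Perm Ω)) (r : Setoid Ω) : Prop :=
  ∃ A : Set Ω, ∀ g ∈ G, ∀ x : Ω, ∃! a : Ω, a ∈ (fun ω => g ω) '' A ∧ r.r a x

/-- `G` is pre-synchronizing: every section-regular partition for `G` is `G`-invariant. -/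
def IsPreSynchronizing (G : Subgroup (Perm Ω)) : Prop :=
  ∀ r : Setoid Ω, IsSectionRegular G r → IsInvariantPartition G r


/-!
Let `s` be a nontrivial `G`-invariant partition and call `t` orthogonal to `s` when every
`t`-class meets every `s`-class in exactly one point. Each block of `s` is then a section of
`t`, and so are its `G`-images, which are blocks again: orthogonal partitions are
section-regular, hence `G`-invariant. Swapping two points of one block `B` turns an orthogonal
partition into another one that differs from it only on `B` and relates a chosen `x ∈ B` to a
chosen `u ∉ B`. So whenever `g x, g u ∉ B`, the points `g x` and `g u` lie in a common class of
every orthogonal partition. With a third block this happens both for `x` and for another point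
of `B`, which then have the same image under `g`. Thus `s` has two blocks, and so does an
orthogonal `t`, whence `|Ω| = 4` and every pair of points is a class of some invariant
partition; this makes `G` regular of exponent two.
-/

def Setoid.IsOrthogonal (s t : Setoid Ω) : Prop :=
  (∀ a b, s a b → t a b → a = b) ∧ ∀ a b, ∃ c, s a c ∧ t c b

def Setoid.AtMostTwoClasses (s : Setoid Ω) : Prop :=
  ∀ a b c, ¬ s a b → ¬ s a c → s b c

def EveryPairIsBlock (G : Subgroup (Perm Ω)) : Prop :=
  ∀ a b : Ω, a ≠ b → ∃ p : Setoid Ω, IsInvariantPartition G p ∧ p a b ∧ ∀ c, p a c → c = a ∨ c = b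

namespace Setoid

variable {s t : Setoid Ω}

theorem exists_ne_rel_of_ne_bot (hs : s ≠ ⊥) : ∃ a b, a ≠ b ∧ s a b := by
  contrapose! hs
  exact eq_bot_iff.2 (Setoid.le_def.2 fun {a b} hab => by_contra fun h => hs a b h hab)

theorem exists_not_rel_of_ne_top (hs : s ≠ ⊤) : ∃ a b, ¬ s a b := by
  contrapose! hs
  exact Setoid.eq_top_iff.2 hs

theorem IsOrthogonal.symm (hst : IsOrthogonal s t) : IsOrthogonal t s := by
  refine ⟨fun a b hta hsa => hst.1 a b hsa hta, fun a b => ?_⟩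
  obtain ⟨c, hbc, hca⟩ := hst.2 b a
  exact ⟨c, t.symm' hca, s.symm' hbc⟩

theorem IsOrthogonal.comap (hst : IsOrthogonal s t) (σ : Perm Ω) (hσ : ∀ a, s (σ a) a) :
    IsOrthogonal s (t.comap σ) := by
  refine ⟨fun a b hab h => σ.injective (hst.1 _ _ ?_ h), fun a b => ?_⟩
  · exact s.trans' (hσ a) (s.trans' hab (s.symm' (hσ b)))
  obtain ⟨c, hac, hcb⟩ := hst.2 a (σ b)
  refine ⟨σ⁻¹ c, s.trans' hac ?_, ?_⟩
  · simpa using hσ (σ⁻¹ c)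
  · rwa [comap_rel, Perm.coe_inv, apply_symm_apply]

theorem IsOrthogonal.exists_rel_of_not_rel (hst : IsOrthogonal s t) {x u : Ω} (hxu : ¬ s x u) :
    ∃ t' : Setoid Ω, IsOrthogonal s t' ∧ t' x u ∧ ∀ a b, ¬ s x a → ¬ s x b → (t' a b ↔ t a b) := by
  classical
  obtain ⟨x', hxx', hx'u⟩ := hst.2 x u
  have hfix : ∀ a, ¬ s x a → swap x x' a = a := fun a ha =>
    swap_apply_of_ne_of_ne (fun h => ha (h ▸ s.refl' x)) (fun h => ha (h ▸ hxx'))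
  refine ⟨t.comap (swap x x'), hst.comap _ fun a => ?_, ?_, fun a b ha hb => ?_⟩
  · rw [swap_apply_def]
    split_ifs with hax hax'
    · exact hax ▸ s.symm' hxx'
    · exact hax' ▸ hxx'
    · exact s.refl' a
  · rwa [comap_rel, swap_apply_left, hfix u hxu]
  · rw [comap_rel, hfix a ha, hfix b hb]

theorem IsOrthogonal.natCard_eq_mul (hst : IsOrthogonal s t) :
    Nat.card Ω = Nat.card (Quotient s) * Nat.card (Quotient t) := by
  rw [← Nat.card_prod]
  refine Nat.card_congr (Equiv.ofBijective (fun a => (Quotient.mk s a, Quotient.mk t a)) ⟨?_, ?_⟩)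
  · intro a b hab
    simp only [Prod.mk.injEq, Quotient.eq] at hab
    exact hst.1 a b hab.1 hab.2
  · rintro ⟨⟨a⟩, ⟨b⟩⟩
    obtain ⟨c, hac, hcb⟩ := hst.2 a b
    exact ⟨c, Prod.ext (Quotient.sound (s.symm' hac)) (Quotient.sound hcb)⟩

theorem IsOrthogonal.eq_or_eq_of_rel (hst : IsOrthogonal s t) (hs : AtMostTwoClasses s)
    {a b c : Ω} (hsab : ¬ s a b) (htab : t a b) (htac : t a c) : c = a ∨ c = b := by
  by_cases hsac : s a c
  · exact Or.inl (hst.1 a c hsac htac).symm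
  · exact Or.inr (hst.1 b c (hs a b c hsab hsac) (t.trans' (t.symm' htab) htac)).symm

theorem AtMostTwoClasses.natCard_quotient_eq_two (hs : AtMostTwoClasses s) {a b : Ω}
    (hab : ¬ s a b) : Nat.card (Quotient s) = 2 := by
  refine Nat.card_eq_two_iff.2 ⟨Quotient.mk s a, Quotient.mk s b,
    fun h => hab (Quotient.exact h), Set.eq_univ_of_forall (Quotient.ind fun c => ?_)⟩
  by_cases hac : s a c
  · exact Or.inl (Quotient.sound (s.symm' hac))
  · exact Or.inr (Quotient.sound (s.symm' (hs a b c hab hac)))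

end Setoid

open Setoid

section PermutationGroups

variable {G : Subgroup (Perm Ω)} {s t : Setoid Ω}

theorem IsInvariantPartition.rel_iff (hs : IsInvariantPartition G s) {g : Perm Ω} (hg : g ∈ G)
    (a b : Ω) : s (g a) (g b) ↔ s a b := by
  refine ⟨fun h => ?_, hs g hg a b⟩
  simpa using hs g⁻¹ (inv_mem hg) _ _ h

theorem exists_isOrthogonal (hG : IsTransitive G) (hs : IsInvariantPartition G s) :
    ∃ t : Setoid Ω, IsOrthogonal s t := by
  rcases isEmpty_or_nonempty Ω with _ | ⟨⟨x₀⟩⟩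
  · exact ⟨⊥, fun a => isEmptyElim a, fun a => isEmptyElim a⟩
  -- `t` is the kernel of a map sending each block onto the block of `x₀` by an element of `G`.
  choose ψ hψG hψ using fun q : Quotient s => hG q.out x₀
  set χ : Ω → Ω := fun a => ψ (Quotient.mk s a) a
  have hχ : ∀ a, s (χ a) x₀ := fun a => by
    rw [← hψ (Quotient.mk s a)]
    exact hs _ (hψG _) _ _ (s.symm' (Quotient.mk_out a))
  have hχ_class : ∀ a b, s a b → χ b = ψ (Quotient.mk s a) b := fun a b hab => by
    simp only [χ, Quotient.sound hab]
  refine ⟨ker χ, fun a b hab h => (ψ _).injective (h.trans (hχ_class a b hab)), fun a b => ?_⟩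
  obtain ⟨c, hc⟩ : ∃ c, ψ (Quotient.mk s a) c = χ b := (ψ _).surjective _
  have hac : s a c := by
    rw [← hs.rel_iff (hψG _), hc]
    exact s.trans' (hχ a) (s.symm' (hχ b))
  exact ⟨c, hac, ker_def.2 ((hχ_class a c hac).trans hc)⟩

theorem isSectionRegular_of_isOrthogonal (hs : IsInvariantPartition G s) (hst : IsOrthogonal s t) :
    IsSectionRegular G t := by
  rcases isEmpty_or_nonempty Ω with _ | ⟨⟨x₀⟩⟩
  · exact ⟨∅, fun _ _ x => isEmptyElim x⟩
  refine ⟨{a | s x₀ a}, fun g hg x => ?_⟩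
  have hmem : ∀ a, a ∈ (fun ω => g ω) '' {a | s x₀ a} ↔ s (g x₀) a := fun a => by
    refine ⟨?_, fun h => ⟨g⁻¹ a, ?_, apply_symm_apply g a⟩⟩
    · rintro ⟨b, hb, rfl⟩
      exact hs g hg x₀ b hb
    · show s x₀ (g⁻¹ a)
      rwa [← hs.rel_iff hg, Perm.coe_inv, apply_symm_apply]
  obtain ⟨c, hc, hcx⟩ := hst.2 (g x₀) x
  refine ⟨c, ⟨(hmem c).2 hc, hcx⟩, fun a ⟨ha, hax⟩ => hst.1 a c ?_ (t.trans' hax (t.symm' hcx))⟩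
  exact s.trans' (s.symm' ((hmem a).1 ha)) hc

theorem IsPreSynchronizing.isInvariantPartition_of_isOrthogonal (hps : IsPreSynchronizing G)
    (hs : IsInvariantPartition G s) (hst : IsOrthogonal s t) : IsInvariantPartition G t :=
  hps t (isSectionRegular_of_isOrthogonal hs hst)

theorem IsPreSynchronizing.rel_apply_of_not_rel (hps : IsPreSynchronizing G)
    (hs : IsInvariantPartition G s) (hst : IsOrthogonal s t) {g : Perm Ω} (hg : g ∈ G) {x u : Ω}
    (hxu : ¬ s x u) (hgx : ¬ s x (g x)) (hgu : ¬ s x (g u)) : t (g x) (g u) := by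
  obtain ⟨t', hst', ht'xu, ht't⟩ := hst.exists_rel_of_not_rel hxu
  exact (ht't _ _ hgx hgu).1 (hps.isInvariantPartition_of_isOrthogonal hs hst' g hg x u ht'xu)

theorem IsPreSynchronizing.atMostTwoClasses (hps : IsPreSynchronizing G) (hG : IsTransitive G)
    (hs : IsInvariantPartition G s) {p q : Ω} (hpq : p ≠ q) (hspq : s p q) :
    AtMostTwoClasses s := by
  intro x y z hxy hxz
  by_contra hyz
  obtain ⟨x₁, hxx₁, hx₁⟩ : ∃ x₁, s x x₁ ∧ x ≠ x₁ := by
    obtain ⟨g₀, hg₀, rfl⟩ := hG p x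
    exact ⟨g₀ q, hs g₀ hg₀ p q hspq, fun h => hpq (g₀.injective h)⟩
  obtain ⟨g, hg, rfl⟩ := hG x y
  obtain ⟨t, hst⟩ := exists_isOrthogonal hG hs
  have hgz : g (g⁻¹ z) = z := apply_symm_apply g z
  have hxu : ¬ s x (g⁻¹ z) := fun h => hyz (hgz ▸ hs g hg _ _ h)
  have hx₁gx₁ : ¬ s x₁ (g x₁) := fun h =>
    hxy (s.trans' hxx₁ (s.trans' h (hs g hg _ _ (s.symm' hxx₁))))
  have h₁ := hps.rel_apply_of_not_rel hs hst hg hxu hxy (by rwa [hgz])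
  have h₂ := hps.rel_apply_of_not_rel hs hst hg (fun h => hxu (s.trans' hxx₁ h)) hx₁gx₁
    (by rw [hgz]; exact fun h => hxz (s.trans' hxx₁ h))
  exact hx₁ (g.injective (hst.1 _ _ (hs g hg _ _ hxx₁) (t.trans' h₁ (t.symm' h₂))))

theorem IsPreSynchronizing.everyPairIsBlock (hps : IsPreSynchronizing G)
    (hs : IsInvariantPartition G s) (hs₂ : AtMostTwoClasses s) (hst : IsOrthogonal s t)
    (ht₂ : AtMostTwoClasses t) : EveryPairIsBlock G := by
  intro a b hab
  by_cases hsab : s a b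
  · have htab : ¬ t a b := fun h => hab (hst.1 a b hsab h)
    exact ⟨s, hs, hsab, fun _ => hst.symm.eq_or_eq_of_rel ht₂ htab hsab⟩
  · obtain ⟨t', hst', ht'ab, -⟩ := hst.exists_rel_of_not_rel hsab
    exact ⟨t', hps.isInvariantPartition_of_isOrthogonal hs hst', ht'ab,
      fun _ => hst'.eq_or_eq_of_rel hs₂ hsab ht'ab⟩

theorem EveryPairIsBlock.eq_one_of_apply_eq_self (hG : EveryPairIsBlock G) {g : Perm Ω}
    (hg : g ∈ G) {a : Ω} (ha : g a = a) : g = 1 := by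
  ext b
  by_contra hb
  have hab : a ≠ b := fun h => hb (h ▸ ha)
  obtain ⟨p, hp, hpab, hpa⟩ := hG a b hab
  rcases hpa _ (ha ▸ hp g hg a b hpab) with h | h
  · exact hab (g.injective (h.trans ha.symm)).symm
  · exact hb h

theorem EveryPairIsBlock.apply_apply (hG : EveryPairIsBlock G) {g : Perm Ω} (hg : g ∈ G)
    (a : Ω) : g (g a) = a := by
  by_cases ha : g a = a
  · rw [ha, ha]
  obtain ⟨p, hp, hpa, hpa'⟩ := hG a (g a) (Ne.symm ha)
  rcases hpa' _ (p.trans' hpa (hp g hg a (g a) hpa)) with h | h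
  · exact h
  · exact absurd (g.injective h) ha

theorem IsTransitive.natCard_eq_of_free (hG : IsTransitive G)
    (hfree : ∀ g ∈ G, ∀ a, g a = a → g = 1) (a : Ω) : Nat.card G = Nat.card Ω := by
  refine Nat.card_eq_of_bijective (fun g : G => (g : Perm Ω) a) ⟨fun g h hgh => ?_, fun b => ?_⟩
  · have := hfree _ (mul_mem (inv_mem h.2) g.2) a (by simp [hgh])
    exact Subtype.ext (inv_mul_eq_one.1 this).symm
  · obtain ⟨g, hg, hgb⟩ := hG a b
    exact ⟨⟨g, hg⟩, hgb⟩

end PermutationGroups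

theorem presynchronizing_imprimitive_is_klein_four
    {Ω : Type*} [Fintype Ω] (G : Subgroup (Perm Ω)) (hG : IsTransitive G)
    (himp : ∃ r : Setoid Ω, IsInvariantPartition G r ∧ r ≠ ⊥ ∧ r ≠ ⊤)
    (hps : IsPreSynchronizing G) :
    Fintype.card Ω = 4 ∧ Nat.card G = 4 ∧ (∀ g ∈ G, g * g = 1) ∧
      ∀ g ∈ G, ∀ x : Ω, g x = x → g = 1 := by
  obtain ⟨r, hr, hr_bot, hr_top⟩ := himp
  obtain ⟨p, q, hpq, hrpq⟩ := exists_ne_rel_of_ne_bot hr_bot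
  obtain ⟨a, b, hrab⟩ := exists_not_rel_of_ne_top hr_top
  obtain ⟨t, hrt⟩ := exists_isOrthogonal hG hr
  have ht := hps.isInvariantPartition_of_isOrthogonal hr hrt
  obtain ⟨c, hrbc, htca⟩ := hrt.2 b a
  have hca : c ≠ a := fun h => hrab (r.symm' (h ▸ hrbc))
  have hr₂ := hps.atMostTwoClasses hG hr hpq hrpq
  have ht₂ := hps.atMostTwoClasses hG ht hca htca
  have htpq : ¬ t p q := fun h => hpq (hrt.1 p q hrpq h)
  have hcard : Fintype.card Ω = 4 := by
    rw [← Nat.card_eq_fintype_card, hrt.natCard_eq_mul, hr₂.natCard_quotient_eq_two hrab,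
      ht₂.natCard_quotient_eq_two htpq]
  have hpairs := hps.everyPairIsBlock hr hr₂ hrt ht₂
  have hfree : ∀ g ∈ G, ∀ x : Ω, g x = x → g = 1 := fun g hg _ => hpairs.eq_one_of_apply_eq_self hg
  refine ⟨hcard, ?_, fun g hg => Perm.ext (hpairs.apply_apply hg), hfree⟩
  rw [hG.natCard_eq_of_free hfree a, Nat.card_eq_fintype_card, hcard]
end
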